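/- Let Γ be a countable discrete group with a measurable action on a measure space (X,ν), and let Y ⊆ X be a domain of asymptotic expansion. Then for every β ∈ [1/2, 1) there exist a constant b(β) > 0 and a finite symmetric subset S(β) ⊆ Γ with 1 ∈ S(β) such that ν((S(β)·A) ∩ Y) > (1+b(β))·ν(A) for every measurable subset A ⊆ Y with (1/2)·ν(Y) ≤ ν(A) ≤ β·ν(Y). -/

import Mathlib

/-!
Apply asymptotic expansion at `α = (1 - β) / 2`, with constants `c, S`, to the part
`B = Y \ S·A` of `Y` that `S·A` misses. If `ν(S·A ∩ Y) ≤ (1 + b) ν(A)` with `b = α c / (1 + c)`,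
then `α ν(Y) ≤ ν(B) ≤ ν(Y) - ν(A) ≤ ν(Y) / 2`, so `B` expands by the factor `1 + c`. Since `S`
is symmetric, `S·B` misses `A`, so this growth happens inside `Y \ A`; it forces
`c (ν(Y) - ν(A)) < α c ν(A)`, which is impossible because `ν(Y) - ν(A) ≥ 2 α ν(Y)`.
-/

open MeasureTheory Set Filter Pointwise

/-- The union `S · A = ⋃ s ∈ S, s • A` of the translates of `A` by elements of the
finite set `S ⊆ Γ`. -/
def finSMul {Γ X : Type*} [Group Γ] [MulAction Γ X] (S : Finset Γ) (A : Set X) : Set X :=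
  ⋃ s ∈ S, s • A

/-- `S` is a finite symmetric subset of `Γ` containing the identity. -/
def SymmFin {Γ : Type*} [Group Γ] (S : Finset Γ) : Prop :=
  (1 : Γ) ∈ S ∧ ∀ s ∈ S, s⁻¹ ∈ S

/-- The `S`-boundary `∂_S A = (S·A) \ A`. -/
def finBdry {Γ X : Type*} [Group Γ] [MulAction Γ X] (S : Finset Γ) (A : Set X) : Set X :=
  finSMul S A \ A

/-- `Y` is a domain of `(c,S)`-expansion: `ν((S·A) ∩ Y) > (1+c)·ν(A)` for every
measurable `A ⊆ Y` with `0 < ν(A) ≤ ν(Y)/2`. -/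
def ExpandsOn {Γ X : Type*} [Group Γ] [MulAction Γ X] [MeasurableSpace X]
    (ν : MeasureTheory.Measure X) (Y : Set X) (c : ℝ) (S : Finset Γ) : Prop :=
  ∀ A : Set X, MeasurableSet A → A ⊆ Y → 0 < ν A → ν A ≤ ν Y / 2 →
    (1 + ENNReal.ofReal c) * ν A < ν (finSMul S A ∩ Y)

/-- `Y` is a domain of expansion: `(c,S)`-expansion for some `c > 0` and some finite
symmetric `S ∋ 1`. -/
def ExpDomain (Γ : Type*) {X : Type*} [Group Γ] [MulAction Γ X] [MeasurableSpace X]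
    (ν : MeasureTheory.Measure X) (Y : Set X) : Prop :=
  ∃ c : ℝ, 0 < c ∧ ∃ S : Finset Γ, SymmFin S ∧ ExpandsOn ν Y c S

/-- The `(α,c,S)` asymptotic-expansion estimate on `Y`: `ν((S·A) ∩ Y) > (1+c)·ν(A)` for
every measurable `A ⊆ Y` with `α·ν(Y) ≤ ν(A) ≤ ν(Y)/2`. -/
def AsymExpandsOn {Γ X : Type*} [Group Γ] [MulAction Γ X] [MeasurableSpace X]
    (ν : MeasureTheory.Measure X) (Y : Set X) (α c : ℝ) (S : Finset Γ) : Prop :=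
  ∀ A : Set X, MeasurableSet A → A ⊆ Y → ENNReal.ofReal α * ν Y ≤ ν A → ν A ≤ ν Y / 2 →
    (1 + ENNReal.ofReal c) * ν A < ν (finSMul S A ∩ Y)

/-- `Y` is a domain of asymptotic expansion. -/
def AsymExpDomain (Γ : Type*) {X : Type*} [Group Γ] [MulAction Γ X] [MeasurableSpace X]
    (ν : MeasureTheory.Measure X) (Y : Set X) : Prop :=
  ∀ α : ℝ, 0 < α → α ≤ 1 / 2 →
    ∃ c : ℝ, 0 < c ∧ ∃ S : Finset Γ, SymmFin S ∧ AsymExpandsOn ν Y α c S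

/-- The action of `Γ` on the probability space `(X,ν)` is strongly ergodic: every almost
invariant sequence of measurable sets is asymptotically trivial. -/
def StronglyErgodic (Γ : Type*) {X : Type*} [Group Γ] [MulAction Γ X] [MeasurableSpace X]
    (ν : MeasureTheory.Measure X) : Prop :=
  ∀ C : ℕ → Set X, (∀ n, MeasurableSet (C n)) →
    (∀ γ : Γ, Filter.Tendsto (fun n => ν (symmDiff (C n) (γ • C n))) Filter.atTop (nhds 0)) →
    Filter.Tendsto (fun n => ν (C n) * (1 - ν (C n))) Filter.atTop (nhds 0)

/-- The action of `Γ` on `(X,ν)` is measure-class-preserving. -/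
def MeasClassPres (Γ : Type*) {X : Type*} [Group Γ] [MulAction Γ X] [MeasurableSpace X]
    (ν : MeasureTheory.Measure X) : Prop :=
  ∀ (γ : Γ) (A : Set X), MeasurableSet A → (ν (γ • A) = 0 ↔ ν A = 0)

/-- The action of `Γ` on `(X,ν)` is ergodic: every invariant measurable set is null or
conull. -/
def ErgodicAct (Γ : Type*) {X : Type*} [Group Γ] [MulAction Γ X] [MeasurableSpace X]
    (ν : MeasureTheory.Measure X) : Prop :=
  ∀ A : Set X, MeasurableSet A → (∀ γ : Γ, γ • A = A) → ν A = 0 ∨ ν Aᶜ = 0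

/-- `W` admits an exhaustion by measurable subsets satisfying `P`. -/
def ExhaustionBy {X : Type*} [MeasurableSpace X] (ν : MeasureTheory.Measure X)
    (W : Set X) (P : Set X → Prop) : Prop :=
  ∃ Y : ℕ → Set X, Monotone Y ∧ (∀ n, MeasurableSet (Y n)) ∧ (∀ n, Y n ⊆ W) ∧
    (∀ n, P (Y n)) ∧ ν (W \ ⋃ n, Y n) = 0

section Translates

variable {Γ X : Type*} [Group Γ] [MulAction Γ X]

lemma subset_finSMul {S : Finset Γ} (hS : (1 : Γ) ∈ S) (A : Set X) : A ⊆ finSMul S A :=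
  fun x hx => mem_iUnion₂.2 ⟨1, hS, by simpa using hx⟩

lemma disjoint_finSMul_of_disjoint_finSMul {S : Finset Γ} (hS : ∀ s ∈ S, s⁻¹ ∈ S)
    {A B : Set X} (h : Disjoint B (finSMul S A)) : Disjoint (finSMul S B) A := by
  refine Set.disjoint_left.2 fun x hxB hxA => ?_
  obtain ⟨s, hs, hx⟩ := mem_iUnion₂.1 hxB
  rw [mem_smul_set_iff_inv_smul_mem] at hx
  exact Set.disjoint_left.1 h hx (mem_iUnion₂.2 ⟨s⁻¹, hS s hs, smul_mem_smul_set hxA⟩)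

lemma measurableSet_finSMul [MeasurableSpace X] (hmeas : ∀ γ : Γ, Measurable fun x : X => γ • x)
    (S : Finset Γ) {A : Set X} (hA : MeasurableSet A) : MeasurableSet (finSMul S A) :=
  S.finite_toSet.measurableSet_biUnion fun s _ => by
    rw [← preimage_smul_inv]
    exact hmeas s⁻¹ hA

end Translates

namespace AsymExpandsOn

variable {Γ X : Type*} [Group Γ] [MulAction Γ X] [MeasurableSpace X] {ν : Measure X}
  {Y : Set X} {S : Finset Γ}

lemma measureReal_lt {α c : ℝ} (h : AsymExpandsOn ν Y α c S) (hα : 0 ≤ α) (hc : 0 ≤ c)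
    (hY : ν Y ≠ ⊤) {A : Set X} (hA : MeasurableSet A) (hAY : A ⊆ Y)
    (hlow : α * ν.real Y ≤ ν.real A) (hup : ν.real A ≤ ν.real Y / 2) :
    (1 + c) * ν.real A < ν.real (finSMul S A ∩ Y) := by
  have hA' : ν A ≠ ⊤ := measure_ne_top_of_subset hAY hY
  have hT : ν (finSMul S A ∩ Y) ≠ ⊤ := measure_ne_top_of_subset inter_subset_right hY
  have hexp := h A hA hAY
    ((ENNReal.toReal_le_toReal (by finiteness) hA').1 (by
      rwa [ENNReal.toReal_mul, ENNReal.toReal_ofReal hα]))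
    ((ENNReal.toReal_le_toReal hA' (by finiteness)).1 (by
      rwa [ENNReal.toReal_div, ENNReal.toReal_ofNat]))
  rw [← ENNReal.toReal_lt_toReal (by finiteness) hT, ENNReal.toReal_mul,
    ENNReal.toReal_add ENNReal.one_ne_top ENNReal.ofReal_ne_top, ENNReal.toReal_one,
    ENNReal.toReal_ofReal hc] at hexp
  exact hexp

lemma upper_range_measureReal (hmeas : ∀ γ : Γ, Measurable fun x : X => γ • x)
    (hYm : MeasurableSet Y) (hY0 : 0 < ν.real Y) (hY : ν Y ≠ ⊤) (hS : SymmFin S)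
    {β c : ℝ} (hc : 0 < c) (hβ : β < 1) (h : AsymExpandsOn ν Y ((1 - β) / 2) c S)
    {A : Set X} (hA : MeasurableSet A) (hAY : A ⊆ Y)
    (hhalf : ν.real Y / 2 ≤ ν.real A) (hupper : ν.real A ≤ β * ν.real Y) :
    (1 + (1 - β) / 2 * c / (1 + c)) * ν.real A < ν.real (finSMul S A ∩ Y) := by
  set α := (1 - β) / 2 with hα
  set b := α * c / (1 + c)
  have hα0 : 0 < α := by linarith
  have hb0 : 0 ≤ b := by positivity
  have hbα : b ≤ α := div_le_of_le_mul₀ (by positivity) (by positivity) (by nlinarith)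
  have hbc : (1 + c) * b = α * c := mul_div_cancel₀ _ (by positivity)
  by_contra! hsmall
  have hSA := measurableSet_finSMul hmeas S hA
  have hAY' : ν.real A ≤ ν.real Y := measureReal_mono hAY hY
  have hB : ν.real (Y \ finSMul S A) = ν.real Y - ν.real (finSMul S A ∩ Y) := by
    rw [← sdiff_inter_self_eq_sdiff, measureReal_sdiff inter_subset_right (hSA.inter hYm)]
  have hSB : ν.real (finSMul S (Y \ finSMul S A) ∩ Y) ≤ ν.real Y - ν.real A := by
    rw [← measureReal_sdiff hAY hA]
    refine measureReal_mono (fun x hx => ⟨hx.2, fun hxA => ?_⟩)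
      (measure_ne_top_of_subset sdiff_subset hY)
    exact Set.disjoint_left.1
      (disjoint_finSMul_of_disjoint_finSMul hS.2 disjoint_sdiff_left) hx.1 hxA
  have hTA : ν.real A ≤ ν.real (finSMul S A ∩ Y) :=
    measureReal_mono (subset_inter (subset_finSMul hS.1 A) hAY)
      (measure_ne_top_of_subset inter_subset_right hY)
  have hBlow : α * ν.real Y ≤ ν.real (Y \ finSMul S A) := by
    nlinarith [mul_le_mul_of_nonneg_left hupper (by linarith : 0 ≤ 1 + b),
      mul_le_mul_of_nonneg_right (mul_le_of_le_one_right hb0 hβ.le |>.trans hbα) hY0.le]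
  have hexpB := h.measureReal_lt hα0.le hc.le hY (hYm.diff hSA) sdiff_subset hBlow
    (by linarith)
  have : 2 * (α * c * ν.real Y) < α * c * ν.real Y := calc
    2 * (α * c * ν.real Y) ≤ c * (ν.real Y - ν.real A) := by
      nlinarith [mul_le_mul_of_nonneg_left hupper hc.le, congrArg (· * (c * ν.real Y)) hα]
    _ < α * c * ν.real A := by
      nlinarith [mul_le_mul_of_nonneg_left hsmall (by linarith : 0 ≤ 1 + c)]
    _ ≤ α * c * ν.real Y := by gcongr
  linarith [mul_pos (mul_pos hα0 hc) hY0]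

end AsymExpandsOn

theorem asymExpDomain_upper_range_general
    {Γ X : Type*} [Group Γ] [MulAction Γ X] [MeasurableSpace X]
    (ν : Measure X)
    (hmeas : ∀ γ : Γ, Measurable fun x : X => γ • x)
    (Y : Set X) (hYm : MeasurableSet Y) (hY0 : 0 < ν Y) (hYfin : ν Y < ⊤)
    (hdom : AsymExpDomain Γ ν Y) :
    ∀ β : ℝ, 1 / 2 ≤ β → β < 1 →
      ∃ b : ℝ, 0 < b ∧ ∃ S : Finset Γ, SymmFin S ∧
        ∀ A : Set X, MeasurableSet A → A ⊆ Y →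
          ν Y / 2 ≤ ν A → ν A ≤ ENNReal.ofReal β * ν Y →
          (1 + ENNReal.ofReal b) * ν A < ν (finSMul S A ∩ Y) := by
  intro β hβ hβ1
  have hα0 : 0 < (1 - β) / 2 := by linarith
  obtain ⟨c, hc, S, hS, hexp⟩ := hdom ((1 - β) / 2) hα0 (by linarith)
  have hb0 : 0 < (1 - β) / 2 * c / (1 + c) := by positivity
  refine ⟨_, hb0, S, hS, fun A hA hAY hhalf hupper => ?_⟩
  have hY : ν Y ≠ ⊤ := hYfin.ne
  have hA' : ν A ≠ ⊤ := measure_ne_top_of_subset hAY hY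
  have hT : ν (finSMul S A ∩ Y) ≠ ⊤ := measure_ne_top_of_subset inter_subset_right hY
  have key := hexp.upper_range_measureReal hmeas hYm (ENNReal.toReal_pos hY0.ne' hY) hY hS hc hβ1
    hA hAY (by simpa [measureReal_def] using ENNReal.toReal_mono hA' hhalf)
    (by simpa [measureReal_def, ENNReal.toReal_ofReal (by linarith : (0 : ℝ) ≤ β)] using
      ENNReal.toReal_mono (by finiteness) hupper)
  rw [← ENNReal.toReal_lt_toReal (by finiteness) hT]
  simpa [measureReal_def, ENNReal.toReal_add, ENNReal.toReal_ofReal hb0.le] using key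

/-- Lemma 3.6: if `Y` is a domain of asymptotic expansion then the
expansion estimate also holds for sets of measure between `ν(Y)/2` and `β·ν(Y)`. -/
theorem asymExpDomain_upper_range
    {Γ X : Type*} [Group Γ] [Countable Γ] [MulAction Γ X] [MeasurableSpace X]
    (ν : Measure X)
    (hmeas : ∀ γ : Γ, Measurable fun x : X => γ • x)
    (Y : Set X) (hYm : MeasurableSet Y) (hY0 : 0 < ν Y) (hYfin : ν Y < ⊤)
    (hdom : AsymExpDomain Γ ν Y) :
    ∀ β : ℝ, 1 / 2 ≤ β → β < 1 →
      ∃ b : ℝ, 0 < b ∧ ∃ S : Finset Γ, SymmFin S ∧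
        ∀ A : Set X, MeasurableSet A → A ⊆ Y →
          ν Y / 2 ≤ ν A → ν A ≤ ENNReal.ofReal β * ν Y →
          (1 + ENNReal.ofReal b) * ν A < ν (finSMul S A ∩ Y) :=
  asymExpDomain_upper_range_general ν hmeas Y hYm hY0 hYfin hdom
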